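/- Let c₀, β > 0, p > 1, and let f : ℝ → (0, ∞) be a C¹ function defined on all of ℝ satisfying f'(s) + β f(s) ≥ c₀ f(s)^p for all s ∈ ℝ. Then f(s) ≤ (β/c₀)^{1/(p-1)} for all s ∈ ℝ. -/

import Mathlib

open Real Filter

/-!
Substituting `g = f ^ (1 - p)` linearises the differential inequality into
`g' ≤ (p - 1) β (g - c₀ / β)`. The integrating factor `exp (-(p - 1) β s)` makes
`g - c₀ / β` grow at least exponentially once it is negative, so `f s > (β / c₀) ^ (1 / (p - 1))`,
i.e. `g s < c₀ / β`, would drive `g` to `-∞`, contradicting `g > 0`.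
-/

theorem antitone_exp_neg_mul_mul_sub {g g' : ℝ → ℝ} {ε K : ℝ}
    (hg : ∀ s, HasDerivAt g (g' s) s) (hle : ∀ s, g' s ≤ ε * (g s - K)) :
    Antitone fun s => exp (-ε * s) * (g s - K) := by
  refine antitone_of_hasDerivAt_nonpos (f' := fun s => exp (-ε * s) * (g' s - ε * (g s - K)))
    (fun s => ?_) fun s => ?_
  · have hexp : HasDerivAt (fun s => exp (-ε * s)) (exp (-ε * s) * -ε) s :=
      ((hasDerivAt_id s).const_mul (-ε)).exp.congr_deriv (by simp)
    exact (hexp.mul ((hg s).sub_const K)).congr_deriv (by ring)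
  · exact mul_nonpos_of_nonneg_of_nonpos (exp_pos _).le (sub_nonpos.2 (hle s))

theorem tendsto_atBot_of_hasDerivAt_le_mul_sub {g g' : ℝ → ℝ} {ε K s₀ : ℝ} (hε : 0 < ε)
    (hg : ∀ s, HasDerivAt g (g' s) s) (hle : ∀ s, g' s ≤ ε * (g s - K)) (hs₀ : g s₀ < K) :
    Tendsto g atTop atBot := by
  set c := exp (-ε * s₀) * (g s₀ - K)
  have hc : c < 0 := mul_neg_of_pos_of_neg (exp_pos _) (sub_neg.2 hs₀)
  have hbound : ∀ s, s₀ ≤ s → g s ≤ exp (ε * s) * c + K := fun s hs => by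
    have := mul_le_mul_of_nonneg_left (antitone_exp_neg_mul_mul_sub hg hle hs) (exp_pos (ε * s)).le
    rwa [← mul_assoc, ← exp_add, neg_mul, add_neg_cancel, exp_zero, one_mul,
      sub_le_iff_le_add] at this
  refine tendsto_atBot_mono' atTop (eventually_atTop.2 ⟨s₀, hbound⟩) ?_
  exact tendsto_atBot_add_const_right _ K
    ((tendsto_exp_atTop.comp (tendsto_id.const_mul_atTop hε)).atTop_mul_const_of_neg hc)

theorem mul_one_sub_mul_rpow_neg_le {c₀ β p y y' : ℝ} (hβ : β ≠ 0) (hp : 1 < p) (hy : 0 < y)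
    (h : c₀ * y ^ p ≤ y' + β * y) :
    y' * ((1 - p) * y ^ (-p)) ≤ (p - 1) * β * (y ^ (1 - p) - c₀ / β) := by
  have hneg : (1 - p) * y ^ (-p) ≤ 0 :=
    mul_nonpos_of_nonpos_of_nonneg (by linarith) (rpow_pos_of_pos hy _).le
  have hcancel : y ^ p * y ^ (-p) = 1 := by rw [← rpow_add hy, add_neg_cancel, rpow_zero]
  have hshift : y * y ^ (-p) = y ^ (1 - p) := by rw [sub_eq_add_neg, rpow_add hy, rpow_one]
  calc y' * ((1 - p) * y ^ (-p))
      ≤ (c₀ * y ^ p - β * y) * ((1 - p) * y ^ (-p)) :=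
        mul_le_mul_of_nonpos_right (by linarith) hneg
    _ = (1 - p) * c₀ * (y ^ p * y ^ (-p)) + (p - 1) * β * (y * y ^ (-p)) := by ring
    _ = (p - 1) * β * (y ^ (1 - p) - c₀ / β) := by rw [hcancel, hshift]; field_simp; ring

theorem rpow_one_sub_lt_inv {a p y : ℝ} (ha : 0 < a) (hp : 1 < p) (hy : a ^ (1 / (p - 1)) < y) :
    y ^ (1 - p) < a⁻¹ := by
  have hexp : 1 / (p - 1) * (1 - p) = -1 := by field_simp [(sub_pos.2 hp).ne']; ring
  calc y ^ (1 - p) < (a ^ (1 / (p - 1))) ^ (1 - p) :=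
        rpow_lt_rpow_of_neg (rpow_pos_of_pos ha _) hy (by linarith)
    _ = a⁻¹ := by rw [← rpow_mul ha.le, hexp, rpow_neg_one]

theorem stmt_7_general (c₀ β p : ℝ) (hc₀ : 0 < c₀) (hβ : 0 < β) (hp : 1 < p)
    (f f' : ℝ → ℝ)
    (hpos : ∀ s, 0 < f s)
    (hderiv : ∀ s, HasDerivAt f (f' s) s)
    (hineq : ∀ s, c₀ * f s ^ p ≤ f' s + β * f s) :
    ∀ s, f s ≤ (β / c₀) ^ (1 / (p - 1)) := by
  intro s
  by_contra! hs
  have hg : ∀ t, HasDerivAt (fun t => f t ^ (1 - p)) (f' t * ((1 - p) * f t ^ (-p))) t :=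
    fun t => ((hderiv t).rpow_const (Or.inl (hpos t).ne')).congr_deriv (by ring_nf)
  have hgs : f s ^ (1 - p) < c₀ / β := by
    simpa only [inv_div] using rpow_one_sub_lt_inv (div_pos hβ hc₀) hp hs
  have hdiverge := tendsto_atBot_of_hasDerivAt_le_mul_sub (mul_pos (sub_pos.2 hp) hβ) hg
    (fun t => mul_one_sub_mul_rpow_neg_le hβ.ne' hp (hpos t) (hineq t)) hgs
  obtain ⟨t, ht⟩ := (hdiverge.eventually_lt_atBot 0).exists
  exact (rpow_pos_of_pos (hpos t) _).not_gt ht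

/-- If f is a positive C¹ function on ℝ with f' + βf ≥ c₀ f^p everywhere
(β, c₀ > 0, p > 1), then f(s) ≤ (β/c₀)^(1/(p-1)) for all s. -/
theorem stmt_7 (c₀ β p : ℝ) (hc₀ : 0 < c₀) (hβ : 0 < β) (hp : 1 < p)
    (f f' : ℝ → ℝ)
    (hpos : ∀ s, 0 < f s)
    (hderiv : ∀ s, HasDerivAt f (f' s) s)
    (hf'cont : Continuous f')
    (hineq : ∀ s, c₀ * f s ^ p ≤ f' s + β * f s) :
    ∀ s, f s ≤ (β / c₀) ^ (1 / (p - 1)) :=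
  stmt_7_general c₀ β p hc₀ hβ hp f f' hpos hderiv hineq
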